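/- The merge capacity-loss Δ(a₁,b₁;a₂,b₂) is monotonically non-decreasing when the first pair is scaled up along a fixed likelihood ratio: if (a₃,b₃) has the same likelihood ratio a₃/b₃ = a₁/b₁ with a₃,b₃ ≥ 0, then Δ(a₁+a₃, b₁+b₃; a₂,b₂) ≥ Δ(a₁,b₁; a₂,b₂). -/

import Mathlib

/-- Capacity contribution of a probability pair `(a,b)`; `Real.logb 2 0 = 0`
implements the convention `0·log₂0 = 0`. -/
noncomputable def Cpair (a b : ℝ) : ℝ :=
  -(a + b) * Real.logb 2 (a + b) + a * Real.logb 2 a + b * Real.logb 2 b + (a + b)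

/-- Capacity loss of a degrading merge of two probability pairs. -/
noncomputable def deltaMerge (a₁ b₁ a₂ b₂ : ℝ) : ℝ :=
  Cpair a₁ b₁ + Cpair a₂ b₂ - Cpair (a₁ + a₂) (b₁ + b₂)

/-!
In nats, `Cpair a b = a + b - h(a, b) / log 2`, where `h(a, b) = (a + b) H(a / (a + b))` is the
unnormalised binary entropy. Because `negMulLog` is concave, `h` (a perspective function) is
1-homogeneous and superadditive; hence `Cpair` is homogeneous and subadditive, so `Δ ≥ 0`, and
`Cpair` is additive on pairs with the same likelihood ratio. The latter gives
`Δ(p + r; q) = Δ(p; q) + Δ(r; p + q) ≥ Δ(p; q)`.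
-/

open Real

noncomputable def pairEntropy (a b : ℝ) : ℝ :=
  negMulLog a + negMulLog b - negMulLog (a + b)

lemma Cpair_eq_sub_pairEntropy (a b : ℝ) : Cpair a b = a + b - pairEntropy a b / log 2 := by
  simp only [Cpair, pairEntropy, negMulLog, logb]
  ring

lemma pairEntropy_mul (c a b : ℝ) : pairEntropy (c * a) (c * b) = c * pairEntropy a b := by
  simp only [pairEntropy, ← mul_add, negMulLog_mul]
  ring

lemma Cpair_mul (c a b : ℝ) : Cpair (c * a) (c * b) = c * Cpair a b := by
  simp only [Cpair_eq_sub_pairEntropy, pairEntropy_mul]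
  ring

lemma Cpair_add_of_mul_eq_mul {a₁ b₁ a₃ b₃ : ℝ} (ha₁ : 0 ≤ a₁) (hb₁ : 0 ≤ b₁)
    (h : a₃ * b₁ = a₁ * b₃) : Cpair (a₁ + a₃) (b₁ + b₃) = Cpair a₁ b₁ + Cpair a₃ b₃ := by
  rcases (add_nonneg ha₁ hb₁).eq_or_lt with h₀ | h₀
  · obtain ⟨rfl, rfl⟩ : a₁ = 0 ∧ b₁ = 0 := ⟨by linarith, by linarith⟩
    simp [Cpair]
  · obtain ⟨c, rfl, rfl⟩ : ∃ c, a₃ = c * a₁ ∧ b₃ = c * b₁ := by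
      refine ⟨(a₃ + b₃) / (a₁ + b₁), ?_, ?_⟩ <;> field_simp
      · linear_combination h
      · linear_combination -h
    rw [← one_add_mul c a₁, ← one_add_mul c b₁, Cpair_mul, Cpair_mul]
    ring

lemma mul_negMulLog_div {s : ℝ} (hs : s ≠ 0) (x : ℝ) :
    s * negMulLog (x / s) = negMulLog x + x * log s := by
  have hx : negMulLog x = s * negMulLog (x / s) + x / s * negMulLog s := by
    rw [← negMulLog_mul, div_mul_cancel₀ x hs]
  rw [hx, show negMulLog s = -s * log s from rfl]
  field_simp
  ring

lemma mul_negMulLog_div_add_mul_negMulLog_div_le {s t x y : ℝ} (hs : 0 < s) (ht : 0 < t)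
    (hx : 0 ≤ x) (hy : 0 ≤ y) :
    s * negMulLog (x / s) + t * negMulLog (y / t) ≤ (s + t) * negMulLog ((x + y) / (s + t)) := by
  have hst : 0 < s + t := add_pos hs ht
  have hconc := concaveOn_negMulLog.2 (Set.mem_Ici.2 (div_nonneg hx hs.le))
    (Set.mem_Ici.2 (div_nonneg hy ht.le)) (div_nonneg hs.le hst.le) (div_nonneg ht.le hst.le)
    (by rw [← add_div, div_self hst.ne'])
  have hmid : s / (s + t) * (x / s) + t / (s + t) * (y / t) = (x + y) / (s + t) := by
    field_simp
  simp only [smul_eq_mul, hmid] at hconc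
  calc s * negMulLog (x / s) + t * negMulLog (y / t)
      = (s + t) * (s / (s + t) * negMulLog (x / s) + t / (s + t) * negMulLog (y / t)) := by
        field_simp
    _ ≤ (s + t) * negMulLog ((x + y) / (s + t)) := by gcongr

lemma add_pairEntropy_le_pairEntropy_add {a b c d : ℝ} (ha : 0 ≤ a) (hb : 0 ≤ b) (hc : 0 ≤ c)
    (hd : 0 ≤ d) : pairEntropy a b + pairEntropy c d ≤ pairEntropy (a + c) (b + d) := by
  rcases (add_nonneg ha hb).eq_or_lt with hab | hab
  · obtain ⟨rfl, rfl⟩ : a = 0 ∧ b = 0 := ⟨by linarith, by linarith⟩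
    simp [pairEntropy]
  rcases (add_nonneg hc hd).eq_or_lt with hcd | hcd
  · obtain ⟨rfl, rfl⟩ : c = 0 ∧ d = 0 := ⟨by linarith, by linarith⟩
    simp [pairEntropy]
  have hac := mul_negMulLog_div_add_mul_negMulLog_div_le hab hcd ha hc
  have hbd := mul_negMulLog_div_add_mul_negMulLog_div_le hab hcd hb hd
  have hsum : a + b + (c + d) = a + c + (b + d) := by ring
  simp only [mul_negMulLog_div hab.ne', mul_negMulLog_div hcd.ne',
    mul_negMulLog_div (add_pos hab hcd).ne'] at hac hbd
  rw [hsum] at hac hbd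
  simp only [pairEntropy, negMulLog] at hac hbd ⊢
  linear_combination hac + hbd

lemma deltaMerge_nonneg {a₁ b₁ a₂ b₂ : ℝ} (ha₁ : 0 ≤ a₁) (hb₁ : 0 ≤ b₁) (ha₂ : 0 ≤ a₂)
    (hb₂ : 0 ≤ b₂) : 0 ≤ deltaMerge a₁ b₁ a₂ b₂ := by
  have := add_pairEntropy_le_pairEntropy_add ha₁ hb₁ ha₂ hb₂
  simp only [deltaMerge, Cpair_eq_sub_pairEntropy]
  have hlog : 0 < log 2 := log_pos one_lt_two
  field_simp
  linarith

theorem deltaMerge_mono_same_LR_general (a₁ b₁ a₂ b₂ a₃ b₃ : ℝ)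
    (ha₁ : 0 ≤ a₁) (hb₁ : 0 ≤ b₁) (ha₂ : 0 ≤ a₂) (hb₂ : 0 ≤ b₂)
    (ha₃ : 0 ≤ a₃) (hb₃ : 0 ≤ b₃)
    (hLR : a₃ * b₁ = a₁ * b₃) :
    deltaMerge (a₁ + a₃) (b₁ + b₃) a₂ b₂ ≥ deltaMerge a₁ b₁ a₂ b₂ := by
  have hsplit : deltaMerge (a₁ + a₃) (b₁ + b₃) a₂ b₂ =
      deltaMerge a₁ b₁ a₂ b₂ + deltaMerge a₃ b₃ (a₁ + a₂) (b₁ + b₂) := by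
    simp only [deltaMerge, Cpair_add_of_mul_eq_mul ha₁ hb₁ hLR, add_right_comm a₁ a₃,
      add_right_comm b₁ b₃, add_comm a₃, add_comm b₃]
    ring
  have := deltaMerge_nonneg ha₃ hb₃ (add_nonneg ha₁ ha₂) (add_nonneg hb₁ hb₂)
  linarith

/-- the merge capacity-loss is monotone when the first pair is
grown along the same likelihood ratio (`a₃ b₁ = a₁ b₃`). -/
theorem deltaMerge_mono_same_LR (a₁ b₁ a₂ b₂ a₃ b₃ : ℝ)
    (ha₁ : 0 ≤ a₁) (hb₁ : 0 ≤ b₁) (ha₂ : 0 ≤ a₂) (hb₂ : 0 ≤ b₂)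
    (ha₃ : 0 ≤ a₃) (hb₃ : 0 ≤ b₃)
    (h₁ : 0 < a₁ + b₁) (h₂ : 0 < a₂ + b₂)
    (hLR : a₃ * b₁ = a₁ * b₃) :
    deltaMerge (a₁ + a₃) (b₁ + b₃) a₂ b₂ ≥ deltaMerge a₁ b₁ a₂ b₂ :=
  deltaMerge_mono_same_LR_general a₁ b₁ a₂ b₂ a₃ b₃ ha₁ hb₁ ha₂ hb₂ ha₃ hb₃ hLR
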